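/- Suppose U ξ = ξ. Then T(ξ/‖ξ‖, 1) = (a + ‖ξ‖)·(ξ/‖ξ‖, 1) and T(−ξ/‖ξ‖, 1) = (a − ‖ξ‖)·(−ξ/‖ξ‖, 1); moreover (a + ‖ξ‖)·(a − ‖ξ‖) = 1, both a + ‖ξ‖ and a − ‖ξ‖ are positive real numbers, and neither equals 1. -/

import Mathlib

/-!
Since `A ξ = a ξ` and `U ξ = ξ`, `T` preserves the plane spanned by `(ξ/‖ξ‖, 0)` and `(0, 1)`,
where it acts by the real symmetric matrix `[[a, ‖ξ‖], [‖ξ‖, a]]`. Its eigenvectors are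
`(±ξ/‖ξ‖, 1)` with eigenvalues `a ± ‖ξ‖`, whose product is `a² - ‖ξ‖² = 1`; both are positive
because `a > ‖ξ‖`, and neither is `1`, as they are mutually inverse and differ by `2‖ξ‖ ≠ 0`.
-/

open scoped InnerProductSpace

noncomputable section

variable {H : Type*} [NormedAddCommGroup H] [InnerProductSpace ℂ H]

/-- The vector `(x, z)` of the Hilbert space direct sum `H ⊕ ℂ`. -/
def mkE (x : H) (z : ℂ) : WithLp 2 (H × ℂ) := (WithLp.equiv 2 (H × ℂ)).symm (x, z)

lemma smul_mkE (c : ℂ) (x : H) (z : ℂ) : c • mkE x z = mkE (c • x) (c * z) := rfl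

section SqrtOneAddSq

variable (r : ℝ)

lemma sqrt_one_add_sq_add_mul_sub : (√(1 + r ^ 2) + r) * (√(1 + r ^ 2) - r) = 1 := by
  have := Real.sq_sqrt (by positivity : (0 : ℝ) ≤ 1 + r ^ 2)
  nlinarith

lemma abs_lt_sqrt_one_add_sq : |r| < √(1 + r ^ 2) :=
  (Real.lt_sqrt (abs_nonneg r)).mpr (by rw [sq_abs]; linarith)

lemma sqrt_one_add_sq_add_pos : 0 < √(1 + r ^ 2) + r := by
  linarith [abs_lt_sqrt_one_add_sq r, neg_abs_le r]

lemma sqrt_one_add_sq_sub_pos : 0 < √(1 + r ^ 2) - r := by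
  linarith [abs_lt_sqrt_one_add_sq r, le_abs_self r]

variable {r}

-- The factors have product `1`, so if one is `1` so is the other, and their difference `2r` vanishes.
lemma sqrt_one_add_sq_add_ne_one (hr : r ≠ 0) : √(1 + r ^ 2) + r ≠ 1 := by
  intro h
  have := sqrt_one_add_sq_add_mul_sub r
  rw [h, one_mul] at this
  exact hr (by linarith)

lemma sqrt_one_add_sq_sub_ne_one (hr : r ≠ 0) : √(1 + r ^ 2) - r ≠ 1 := by
  intro h
  have := sqrt_one_add_sq_add_mul_sub r
  rw [h, mul_one] at this
  exact hr (by linarith)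

end SqrtOneAddSq

lemma apply_self_of_apply_eq_add_inner_smul {ξ : H} (hξ : ξ ≠ 0) {a : ℝ} {A : H →L[ℂ] H}
    (hA : A ξ = ξ + ((((a - 1) / ‖ξ‖ ^ 2 : ℝ) : ℂ) * ⟪ξ, ξ⟫_ℂ) • ξ) :
    A ξ = (a : ℂ) • ξ := by
  have hn : (‖ξ‖ : ℂ) ≠ 0 := by exact_mod_cast norm_ne_zero_iff.mpr hξ
  rw [hA, inner_self_eq_norm_sq_to_K, RCLike.ofReal_eq_complex_ofReal]
  match_scalars
  field_simp
  ring

lemma apply_mkE_smul_self_one {ξ : H} {a : ℝ} {A U : H →L[ℂ] H}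
    {T : WithLp 2 (H × ℂ) →L[ℂ] WithLp 2 (H × ℂ)} (hAξ : A ξ = (a : ℂ) • ξ) (hUξ : U ξ = ξ)
    (hT : ∀ (x : H) (z : ℂ),
      T (mkE x z) = mkE (U (A x) + z • U ξ) (⟪ξ, x⟫_ℂ + (a : ℂ) * z))
    {c : ℂ} (hc : c ^ 2 * (‖ξ‖ : ℂ) ^ 2 = 1) :
    T (mkE (c • ξ) 1) = ((a : ℂ) + c * (‖ξ‖ : ℂ) ^ 2) • mkE (c • ξ) 1 := by
  simp only [hT, smul_mkE, map_smul, hAξ, hUξ, one_smul, inner_smul_right,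
    inner_self_eq_norm_sq_to_K, RCLike.ofReal_eq_complex_ofReal]
  congr 1
  · match_scalars
    linear_combination -hc
  · ring

/-- The paper's inner product `⟨x,y⟩` is `⟪y,x⟫_ℂ` in Mathlib's convention. -/
theorem stmt12
    (ξ : H) (hξ : ξ ≠ 0) (a : ℝ) (ha : a = Real.sqrt (1 + ‖ξ‖ ^ 2))
    (A : H →L[ℂ] H)
    (hA : ∀ x : H, A x = x + ((((a - 1) / ‖ξ‖ ^ 2 : ℝ) : ℂ) * ⟪ξ, x⟫_ℂ) • ξ)
    (U : H →L[ℂ] H) (hUξ : U ξ = ξ)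
    (T : WithLp 2 (H × ℂ) →L[ℂ] WithLp 2 (H × ℂ))
    (hT : ∀ (x : H) (z : ℂ),
      T (mkE x z) = mkE (U (A x) + z • U ξ) (⟪ξ, x⟫_ℂ + (a : ℂ) * z)) :
    T (mkE ((‖ξ‖ : ℂ)⁻¹ • ξ) 1) = ((a + ‖ξ‖ : ℝ) : ℂ) • mkE ((‖ξ‖ : ℂ)⁻¹ • ξ) 1 ∧
      T (mkE (-((‖ξ‖ : ℂ)⁻¹ • ξ)) 1) = ((a - ‖ξ‖ : ℝ) : ℂ) • mkE (-((‖ξ‖ : ℂ)⁻¹ • ξ)) 1 ∧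
      (a + ‖ξ‖) * (a - ‖ξ‖) = 1 ∧
      0 < a + ‖ξ‖ ∧ 0 < a - ‖ξ‖ ∧ a + ‖ξ‖ ≠ 1 ∧ a - ‖ξ‖ ≠ 1 := by
  have hn : ‖ξ‖ ≠ 0 := norm_ne_zero_iff.mpr hξ
  have hnC : (‖ξ‖ : ℂ) ≠ 0 := by exact_mod_cast hn
  have hAξ := apply_self_of_apply_eq_add_inner_smul hξ (hA ξ)
  have hplus := apply_mkE_smul_self_one hAξ hUξ hT (c := (‖ξ‖ : ℂ)⁻¹) (by field_simp)
  have hminus := apply_mkE_smul_self_one hAξ hUξ hT (c := -(‖ξ‖ : ℂ)⁻¹) (by field_simp)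
  rw [neg_smul] at hminus
  subst ha
  refine ⟨?_, ?_, sqrt_one_add_sq_add_mul_sub _, sqrt_one_add_sq_add_pos _,
    sqrt_one_add_sq_sub_pos _, sqrt_one_add_sq_add_ne_one hn, sqrt_one_add_sq_sub_ne_one hn⟩
  · rw [hplus]; congr 1; push_cast; field_simp
  · rw [hminus]; congr 1; push_cast; field_simp; ring

end
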